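/- Let (L₁, …, L_h; w₁, …, w_h) be a vertex hierarchy of height h on the weighted graph G = (V, w₁). Then for every vertex v ∈ V and every ancestor u ∈ Anc(v): d(v,u) < ⊤ and d(v,u) ≥ dist_G(v,u); in particular v and u are connected in G. -/

import Mathlib

namespace ISLabel

variable {V : Type*}

/-- Two vertices are adjacent in the weighted graph `w` when they are distinct and
joined by an edge of finite weight. -/
def Adj (w : V → V → ℕ∞) (u v : V) : Prop := u ≠ v ∧ w u v < ⊤

/-- `p` is a walk from `u` to `v` in the weighted graph `w`: a nonempty list of
vertices starting at `u`, ending at `v`, with consecutive vertices adjacent. -/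
def IsWalk (w : V → V → ℕ∞) (u v : V) (p : List V) : Prop :=
  p ≠ [] ∧ p.head? = some u ∧ p.getLast? = some v ∧ p.Chain' (Adj w)

/-- The length of a list of vertices: the sum of `f` over consecutive pairs. -/
def pathLen (f : V → V → ℕ∞) (p : List V) : ℕ∞ :=
  ((p.zip p.tail).map fun e => f e.1 e.2).sum

/-- The distance from `u` to `v` in `w`: the infimum of the lengths of all walks
from `u` to `v` (`⊤` if there is no such walk). -/
noncomputable def wdist (w : V → V → ℕ∞) (u v : V) : ℕ∞ :=
  ⨅ p : {p : List V // IsWalk w u v p}, pathLen w p.1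

/-- `I` is an independent set in `w`. -/
def IsIndep (w : V → V → ℕ∞) (I : Set V) : Prop :=
  ∀ u ∈ I, ∀ v ∈ I, ¬ Adj w u v

/-- `w` is a weighted undirected graph: symmetric, and every off-diagonal value is
either `⊤` (no edge) or a weight `≥ 1`. -/
def IsWGraph (w : V → V → ℕ∞) : Prop :=
  (∀ u v, w u v = w v u) ∧ ∀ u v, u ≠ v → 1 ≤ w u v

/-- `w` is supported on `S`: all weights touching a vertex outside `S` are `⊤`. -/
def SupportedOn (w : V → V → ℕ∞) (S : Set V) : Prop :=
  ∀ u v, u ∉ S ∨ v ∉ S → w u v = ⊤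

/-- `VsetOf L i` is the vertex set `V_i = V ∖ (L₁ ∪ … ∪ L_{i-1})`. -/
def VsetOf (L : ℕ → Set V) (i : ℕ) : Set V := {v | ∀ j, 1 ≤ j → j < i → v ∉ L j}

/-- A vertex hierarchy of height `h ≥ 1` on the weighted graph `w 1`:
pairwise disjoint independent levels `L 1, …, L h` covering `V`, and graphs
`w i` supported on `V_i` obtained by the augmenting-edge construction. -/
structure VertexHierarchy (V : Type*) (h : ℕ) where
  L : ℕ → Set V
  w : ℕ → V → V → ℕ∞
  h_pos : 1 ≤ h
  wgraph : ∀ i, 1 ≤ i → i ≤ h → IsWGraph (w i)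
  disj : ∀ i j, 1 ≤ i → i ≤ h → 1 ≤ j → j ≤ h → i ≠ j → ∀ v, v ∈ L i → v ∉ L j
  cover : ∀ v : V, ∃ i, 1 ≤ i ∧ i ≤ h ∧ v ∈ L i
  supported : ∀ i, 1 ≤ i → i ≤ h → SupportedOn (w i) (VsetOf L i)
  aug : ∀ i, 2 ≤ i → i ≤ h → ∀ u v : V, u ≠ v → u ∈ VsetOf L i → v ∈ VsetOf L i →
    w i u v = min (w (i - 1) u v) (⨅ x ∈ L (i - 1), w (i - 1) u x + w (i - 1) x v)
  indep : ∀ i, 1 ≤ i → i ≤ h → IsIndep (w i) (L i)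

/-- The level `ℓ(v)`: the unique `i` with `1 ≤ i ≤ h` and `v ∈ L i`. -/
noncomputable def level {h : ℕ} (H : VertexHierarchy V h) (v : V) : ℕ :=
  sInf {i | 1 ≤ i ∧ i ≤ h ∧ v ∈ H.L i}

/-- One step of an ascending sequence: go to a strictly higher-level vertex that is
adjacent in the graph at the current vertex's level. -/
def AscStep {h : ℕ} (H : VertexHierarchy V h) (a b : V) : Prop :=
  level H a < level H b ∧ Adj (H.w (level H a)) a b

/-- `p` is an ascending sequence from `v` to `u`. -/
def IsAscending {h : ℕ} (H : VertexHierarchy V h) (v u : V) (p : List V) : Prop :=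
  p ≠ [] ∧ p.head? = some v ∧ p.getLast? = some u ∧ p.Chain' (AscStep H)

/-- The set of ancestors of `v`. -/
def Anc {h : ℕ} (H : VertexHierarchy V h) (v : V) : Set V :=
  {u | ∃ p, IsAscending H v u p}

/-- `d(v,u)`: the infimum of the lengths of ascending sequences from `v` to `u`,
where each step `a → b` costs `w (ℓ(a)) a b`; `⊤` if `u` is not an ancestor of `v`. -/
noncomputable def ancDist {h : ℕ} (H : VertexHierarchy V h) (v u : V) : ℕ∞ :=
  ⨅ p : {p : List V // IsAscending H v u p},
    pathLen (fun a b => H.w (level H a) a b) p.1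

/-!
Every edge of `w_i` is a shortcut in `G`: an augmenting edge `u – v` of `w_i` through
`x ∈ L_{i-1}` is bounded by the two edges `u – x`, `x – v` of `w_{i-1}`, so induction on `i`
gives `dist_G(u, c) ≤ w_i(u, v) + dist_G(v, c)`. Peeling off the steps of an ascending
sequence one at a time bounds `dist_G(v, u)` by its length, which is finite because every
step is an edge.
-/

@[simp]
lemma pathLen_singleton (f : V → V → ℕ∞) (x : V) : pathLen f [x] = 0 := by
  simp [pathLen]

@[simp]
lemma pathLen_cons_cons (f : V → V → ℕ∞) (x y : V) (l : List V) :
    pathLen f (x :: y :: l) = f x y + pathLen f (y :: l) := by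
  simp [pathLen]

lemma pathLen_lt_top {f : V → V → ℕ∞} :
    ∀ {p : List V}, p.IsChain (fun a b => f a b < ⊤) → pathLen f p < ⊤
  | [], _ => by simp [pathLen]
  | [_], _ => by simp
  | x :: y :: l, hp => by
    rw [List.isChain_cons_cons] at hp
    rw [pathLen_cons_cons]
    exact ENat.add_lt_top.mpr ⟨hp.1, pathLen_lt_top hp.2⟩

lemma wdist_le_pathLen {w : V → V → ℕ∞} {u v : V} {p : List V} (hp : IsWalk w u v p) :
    wdist w u v ≤ pathLen w p :=
  iInf_le (fun p : {p : List V // IsWalk w u v p} => pathLen w p.1) ⟨p, hp⟩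

lemma wdist_self (w : V → V → ℕ∞) (a : V) : wdist w a a = 0 :=
  nonpos_iff_eq_zero.mp <| by
    simpa using wdist_le_pathLen (⟨by simp, rfl, rfl, List.isChain_singleton a⟩ :
      IsWalk w a a [a])

lemma wdist_le_add_wdist (w : V → V → ℕ∞) (a b c : V) :
    wdist w a c ≤ w a b + wdist w b c := by
  rcases eq_or_ne a b with rfl | hab
  · exact le_add_self
  rcases (le_top : w a b ≤ ⊤).eq_or_lt with hw | hw
  · simp [hw]
  unfold wdist
  rw [ENat.add_iInf]
  refine le_iInf fun ⟨q, hq0, hqb, hqc, hq⟩ => ?_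
  obtain ⟨b', q, rfl⟩ := List.exists_cons_of_ne_nil hq0
  obtain rfl : b' = b := by simpa using hqb
  have haq : IsWalk w a c (a :: b' :: q) :=
    ⟨by simp, rfl, by simpa using hqc, List.isChain_cons_cons.mpr ⟨⟨hab, hw⟩, hq⟩⟩
  exact (wdist_le_pathLen haq).trans_eq (pathLen_cons_cons _ _ _ _)

lemma wdist_le_pathLen_of_forall_le_add {w f : V → V → ℕ∞}
    (hf : ∀ a b c, wdist w a c ≤ f a b + wdist w b c) :
    ∀ {p : List V} {u v : V}, p.head? = some u → p.getLast? = some v →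
      wdist w u v ≤ pathLen f p
  | [], _, _, hu, _ => by simp at hu
  | [x], _, _, hu, hv => by
    obtain rfl : x = _ := by simpa using hu
    obtain rfl : x = _ := by simpa using hv
    simp [wdist_self]
  | x :: y :: l, _, _, hu, hv => by
    obtain rfl : x = _ := by simpa using hu
    rw [pathLen_cons_cons]
    exact (hf x y _).trans <| add_le_add le_rfl <|
      wdist_le_pathLen_of_forall_le_add hf rfl (by simpa [List.getLast?_cons_cons] using hv)

namespace VertexHierarchy

variable {h : ℕ} (H : VertexHierarchy V h)

lemma level_mem_Icc (v : V) : level H v ∈ Set.Icc 1 h :=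
  let ⟨i, hi⟩ := H.cover v
  let ⟨h1, hh, _⟩ := Nat.sInf_mem (s := {i | 1 ≤ i ∧ i ≤ h ∧ v ∈ H.L i}) ⟨i, hi⟩
  ⟨h1, hh⟩

lemma wdist_le_add_wdist {i : ℕ} (hi : 1 ≤ i) (hih : i ≤ h) (a b c : V) :
    wdist (H.w 1) a c ≤ H.w i a b + wdist (H.w 1) b c := by
  induction i, hi using Nat.le_induction generalizing a b c with
  | base => exact ISLabel.wdist_le_add_wdist _ a b c
  | succ n hn ih =>
    rcases eq_or_ne a b with rfl | hab
    · exact le_add_self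
    by_cases hab' : a ∈ VsetOf H.L (n + 1) ∧ b ∈ VsetOf H.L (n + 1)
    · rw [H.aug (n + 1) (by omega) hih a b hab hab'.1 hab'.2, Nat.add_sub_cancel,
        min_add]
      simp only [ENat.iInf_add]
      refine le_min (ih (by omega) a b c) (le_iInf₂ fun x _ => ?_)
      calc wdist (H.w 1) a c ≤ H.w n a x + wdist (H.w 1) x c := ih (by omega) a x c
        _ ≤ H.w n a x + (H.w n x b + wdist (H.w 1) b c) := by gcongr; exact ih (by omega) x b c
        _ = _ := (add_assoc _ _ _).symm
    · simp [H.supported (n + 1) (by omega) hih a b (by tauto)]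

end VertexHierarchy

lemma ancDist_le_pathLen {h : ℕ} {H : VertexHierarchy V h} {v u : V} {p : List V}
    (hp : IsAscending H v u p) : ancDist H v u ≤ pathLen (fun a b => H.w (level H a) a b) p :=
  iInf_le (fun p : {p : List V // IsAscending H v u p} => pathLen _ p.1) ⟨p, hp⟩

theorem ancDist_finite_ge_dist_general {h : ℕ} (H : VertexHierarchy V h) :
    ∀ v : V, ∀ u ∈ Anc H v,
      ancDist H v u < ⊤ ∧ wdist (H.w 1) v u ≤ ancDist H v u ∧
        wdist (H.w 1) v u < ⊤ := by
  intro v u ⟨p, hp⟩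
  have hstep : ∀ a b c, wdist (H.w 1) a c ≤ H.w (level H a) a b + wdist (H.w 1) b c :=
    fun a b c => H.wdist_le_add_wdist (H.level_mem_Icc a).1 (H.level_mem_Icc a).2 a b c
  have hfin : ancDist H v u < ⊤ :=
    (ancDist_le_pathLen hp).trans_lt <|
      pathLen_lt_top <| List.IsChain.imp (fun _ _ hab => hab.2.2) hp.2.2.2
  have hle : wdist (H.w 1) v u ≤ ancDist H v u :=
    le_iInf fun q => wdist_le_pathLen_of_forall_le_add hstep q.2.2.1 q.2.2.2.1
  exact ⟨hfin, hle, hle.trans_lt hfin⟩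

/-- label distances to ancestors are finite upper bounds on the
true distances; in particular a vertex is connected to each of its ancestors. -/
theorem ancDist_finite_ge_dist [Fintype V] {h : ℕ} (H : VertexHierarchy V h) :
    ∀ v : V, ∀ u ∈ Anc H v,
      ancDist H v u < ⊤ ∧ wdist (H.w 1) v u ≤ ancDist H v u ∧
        wdist (H.w 1) v u < ⊤ :=
  ancDist_finite_ge_dist_general H

end ISLabel
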